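/- Consider the autonomous radial problem (54): (\varphi_p(u'))'(r) + ((n-1)/r)\varphi_p(u'(r)) + \lambda f(u(r)) = 0 on (0,1), u'(0)=u(1)=0, where \lambda > 0 is a parameter and f \in C^1([0,\infty)). Assume that f is either positive for all u > 0, or changes sign exactly once on (0,\infty), being negative for small u > 0 and positive for large u. If (\lambda_1,u_1) and (\lambda_2,u_2) are two pairs, each consisting of a positive parameter and a positive solution of (54) for that parameter, and u_1(0) = u_2(0), then \lambda_1 = \lambda_2 and u_1 \equiv u_2. -/

import Mathlib

/-!
A positive solution is decreasing and has `f(u(0)) > 0`, by an energy argument. For a given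
`λ`, the initial value problem `u(0) = d`, `u'(0) = 0` has at most one decreasing solution:
near the singular point `r = 0` by a contraction estimate, away from it by the uniqueness
theorem for Lipschitz systems. The equation is invariant under `u ↦ u(κ ·)`, `λ ↦ κ^p λ`. If
`λ₁ ≤ λ₂`, rescaling `u₂` by `κ = (λ₁/λ₂)^{1/p} ≤ 1` gives a solution for `λ₁` with the same
initial value, so `u₁ = u₂(κ ·)`, and `u₂(κ) = u₁(1) = 0` forces `κ = 1`.
-/

open Set

/-- `φ_p(t) = t |t|^{p-2}` (real exponent), with `φ_p(0)=0`. -/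
noncomputable def phi (p t : ℝ) : ℝ := t * |t| ^ (p - 2)

/-- `φ_p'(t) = (p-1) |t|^{p-2}`. -/
noncomputable def phi' (p t : ℝ) : ℝ := (p - 1) * |t| ^ (p - 2)

/-- The derivative of a function on `[0,1]` (one-sided at the endpoints). -/
noncomputable def du (u : ℝ → ℝ) : ℝ → ℝ := derivWithin u (Set.Icc 0 1)

/-- A positive (classical) solution of the radial problem (30):
`(φ_p(u'))' + ((n-1)/r) φ_p(u') + f(r,u) = 0` on `(0,1)`, `u'(0) = u(1) = 0`,
with `u ∈ C^1[0,1]`, `φ_p ∘ u' ∈ C^1((0,1])`, and `u > 0` on `[0,1)`. -/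
structure RadialSol (p : ℝ) (n : ℕ) (f : ℝ → ℝ → ℝ) (u : ℝ → ℝ) : Prop where
  reg : ContDiffOn ℝ 1 u (Set.Icc 0 1)
  reg' : ContDiffOn ℝ 1 (fun r => phi p (du u r)) (Set.Ioc 0 1)
  pos : ∀ r ∈ Set.Ico (0:ℝ) 1, 0 < u r
  bc0 : du u 0 = 0
  bc1 : u 1 = 0
  ode : ∀ r ∈ Set.Ioo (0:ℝ) 1,
    deriv (fun s => phi p (du u s)) r + ((n : ℝ) - 1) / r * phi p (du u r) + f r (u r) = 0

/-- A solution of the linearized problem (31) at `u`: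
`(φ_p'(u') w')' + ((n-1)/r) φ_p'(u') w' + f_u(r,u) w = 0` on `(0,1)`, `w'(0) = w(1) = 0`. -/
structure LinSol (p : ℝ) (n : ℕ) (f : ℝ → ℝ → ℝ) (u w : ℝ → ℝ) : Prop where
  reg : ContDiffOn ℝ 1 w (Set.Icc 0 1)
  reg' : ContDiffOn ℝ 1 (fun r => phi' p (du u r) * du w r) (Set.Ioc 0 1)
  ode : ∀ r ∈ Set.Ioo (0:ℝ) 1,
    deriv (fun s => phi' p (du u s) * du w s) r
      + ((n : ℝ) - 1) / r * (phi' p (du u r) * du w r) + deriv (f r) (u r) * w r = 0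
  bc0 : du w 0 = 0
  bc1 : w 1 = 0

open Filter Topology

section Phi

variable {p : ℝ}

@[simp] lemma phi_zero (p : ℝ) : phi p 0 = 0 := by simp [phi]

lemma abs_phi (hp : 1 < p) (t : ℝ) : |phi p t| = |t| ^ (p - 1) := by
  rcases eq_or_ne t 0 with rfl | ht
  · simp [Real.zero_rpow (by linarith : p - 1 ≠ 0)]
  · rw [phi, abs_mul, Real.abs_rpow_of_nonneg (abs_nonneg t), abs_abs,
      show p - 1 = 1 + (p - 2) by ring, Real.rpow_add (abs_pos.2 ht), Real.rpow_one]

lemma phi_neg {t : ℝ} (ht : t < 0) : phi p t < 0 :=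
  mul_neg_of_neg_of_pos ht (Real.rpow_pos_of_pos (abs_pos.2 ht.ne) _)

lemma phi_nonneg {t : ℝ} (ht : 0 ≤ t) : 0 ≤ phi p t :=
  mul_nonneg ht (Real.rpow_nonneg (abs_nonneg t) _)

lemma phi_neg_iff {t : ℝ} : phi p t < 0 ↔ t < 0 :=
  ⟨fun h => not_le.1 fun ht => (phi_nonneg ht).not_gt h, phi_neg⟩

lemma mul_phi_nonneg (p t : ℝ) : 0 ≤ t * phi p t := by
  rw [phi, ← mul_assoc]
  exact mul_nonneg (mul_self_nonneg t) (Real.rpow_nonneg (abs_nonneg t) _)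

lemma phi_mul_of_pos {κ : ℝ} (hκ : 0 < κ) (t : ℝ) : phi p (κ * t) = κ ^ (p - 1) * phi p t := by
  rw [phi, phi, abs_mul, abs_of_pos hκ, Real.mul_rpow hκ.le (abs_nonneg t),
    show p - 1 = 1 + (p - 2) by ring, Real.rpow_add hκ, Real.rpow_one]
  ring

lemma phi_conj_phi (hp : 1 < p) (t : ℝ) : phi (p / (p - 1)) (phi p t) = t := by
  rcases eq_or_ne t 0 with rfl | ht
  · simp
  · have hp1 : p - 1 ≠ 0 := by linarith
    rw [phi, abs_phi hp, phi, ← Real.rpow_mul (abs_nonneg t), mul_assoc,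
      ← Real.rpow_add (abs_pos.2 ht),
      show (p - 2) + (p - 1) * (p / (p - 1) - 2) = 0 by field_simp; ring,
      Real.rpow_zero, mul_one]

lemma continuous_phi (hp : 1 < p) : Continuous (phi p) := by
  refine continuous_iff_continuousAt.2 fun x => ?_
  rcases eq_or_ne x 0 with rfl | hx
  · have h : Tendsto (fun t : ℝ => |t| ^ (p - 1)) (𝓝 0) (𝓝 0) := by
      simpa [Real.zero_rpow (by linarith : p - 1 ≠ 0)] using
        (continuous_abs.tendsto' (0 : ℝ) 0 abs_zero).rpow_const (p := p - 1)
          (Or.inr (by linarith))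
    rw [ContinuousAt, phi_zero]
    exact squeeze_zero_norm (fun t => (abs_phi hp t).le) h
  · exact continuousAt_id.mul ((Real.continuousAt_rpow_const _ _
      (Or.inl (abs_ne_zero.2 hx))).comp continuous_abs.continuousAt)

lemma contDiffAt_phi {t : ℝ} (ht : t ≠ 0) : ContDiffAt ℝ 1 (phi p) t :=
  contDiffAt_id.mul
    ((Real.contDiffAt_rpow_const_of_ne (abs_ne_zero.2 ht)).comp t (contDiffAt_abs ht))

lemma exists_lipschitzOnWith_phi {A : ℝ} (hA : 0 < A) (B : ℝ) :
    ∃ K, LipschitzOnWith K (phi p) (Icc (-B) (-A)) :=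
  ContDiffOn.exists_lipschitzOnWith
    (fun t ht => (contDiffAt_phi (by linarith [ht.2] : t ≠ 0)).contDiffWithinAt)
    one_ne_zero (convex_Icc _ _) isCompact_Icc

lemma hasDerivAt_abs_rpow_phi (hp : 1 < p) (t : ℝ) :
    HasDerivAt (fun t : ℝ => |t| ^ p) (p * phi p t) t := by
  convert hasDerivAt_abs_rpow t hp using 1
  rw [phi]
  ring

end Phi

section Comparison

variable {G H G' H' : ℝ → ℝ} {a b : ℝ}

lemma sub_le_sub_of_hasDerivAt_le (hG : ContinuousOn G (Icc a b))
    (hH : ContinuousOn H (Icc a b)) (hG' : ∀ x ∈ Ioo a b, HasDerivAt G (G' x) x)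
    (hH' : ∀ x ∈ Ioo a b, HasDerivAt H (H' x) x) (hle : ∀ x ∈ Ioo a b, G' x ≤ H' x)
    {x : ℝ} (hx : x ∈ Icc a b) : G x - G a ≤ H x - H a := by
  have hmono : MonotoneOn (fun x => H x - G x) (Icc a b) := by
    refine monotoneOn_of_hasDerivWithinAt_nonneg (f' := fun x => H' x - G' x) (convex_Icc a b)
      (hH.sub hG) ?_ ?_ <;> rw [interior_Icc]
    · exact fun x hx => ((hH' x hx).sub (hG' x hx)).hasDerivWithinAt
    · exact fun x hx => sub_nonneg.2 (hle x hx)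
  linarith [hmono (left_mem_Icc.2 (hx.1.trans hx.2)) hx hx.1]

lemma abs_sub_le_of_abs_hasDerivAt_le (hG : ContinuousOn G (Icc a b))
    (hH : ContinuousOn H (Icc a b)) (hG' : ∀ x ∈ Ioo a b, HasDerivAt G (G' x) x)
    (hH' : ∀ x ∈ Ioo a b, HasDerivAt H (H' x) x) (hle : ∀ x ∈ Ioo a b, |G' x| ≤ H' x)
    {x : ℝ} (hx : x ∈ Icc a b) : |G x - G a| ≤ H x - H a := by
  have hupper := sub_le_sub_of_hasDerivAt_le hG hH hG' hH'
    (fun x hx => (le_abs_self _).trans (hle x hx)) hx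
  have hlower := sub_le_sub_of_hasDerivAt_le hG.neg hH (fun x hx => (hG' x hx).neg) hH'
    (fun x hx => (neg_le_abs _).trans (hle x hx)) hx
  simp only [Pi.neg_apply] at hlower
  rw [abs_le]
  constructor <;> linarith

end Comparison

lemma exists_first_zero {g : ℝ → ℝ} {a b : ℝ} (hab : a ≤ b) (hg : ContinuousOn g (Icc a b))
    (ha : g a < 0) (hb : 0 ≤ g b) : ∃ c ∈ Ioc a b, g c = 0 ∧ ∀ x ∈ Ico a c, g x < 0 := by
  set Z := Icc a b ∩ g ⁻¹' {0}
  have hZ : IsClosed Z := hg.preimage_isClosed_of_isClosed isClosed_Icc isClosed_singleton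
  have hzero : ∀ x ∈ Icc a b, 0 ≤ g x → ∃ z ∈ Z, z ≤ x := fun x hx hx0 => by
    obtain ⟨z, hz, hz0⟩ := intermediate_value_Icc hx.1 (hg.mono (Icc_subset_Icc_right hx.2))
      ⟨ha.le, hx0⟩
    exact ⟨z, ⟨⟨hz.1, hz.2.trans hx.2⟩, hz0⟩, hz.2⟩
  obtain ⟨z, hzZ, -⟩ := hzero b (right_mem_Icc.2 hab) hb
  have hbdd : BddBelow Z := ⟨a, fun z hz => hz.1.1⟩
  have hmem : sInf Z ∈ Z := hZ.csInf_mem ⟨z, hzZ⟩ hbdd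
  have hne : sInf Z ≠ a := fun h => by
    have : g (sInf Z) = 0 := hmem.2
    rw [h] at this
    linarith
  refine ⟨sInf Z, ⟨lt_of_le_of_ne hmem.1.1 (Ne.symm hne), hmem.1.2⟩, hmem.2, fun x hx => ?_⟩
  by_contra! hx0
  obtain ⟨z, hzZ, hzx⟩ := hzero x ⟨hx.1, hx.2.le.trans hmem.1.2⟩ hx0
  linarith [csInf_le hbdd hzZ, hx.2]

lemma eventually_forall_Icc_of_nhdsWithin {P : ℝ → Prop}
    (h : ∀ᶠ s in 𝓝[Icc 0 1] 0, P s) : ∀ᶠ R in 𝓝[>] 0, ∀ s ∈ Icc 0 R, P s := by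
  rw [nhdsWithin_Icc_eq_nhdsGE zero_lt_one] at h
  obtain ⟨ε, hε, hsub⟩ := mem_nhdsGE_iff_exists_Ico_subset.1 h
  filter_upwards [Ioo_mem_nhdsGT hε] with R hR s hs using hsub ⟨hs.1, hs.2.trans_lt hR.2⟩

lemma eventually_forall_Icc_mem_Icc {g : ℝ → ℝ} (hg : ContinuousOn g (Icc 0 1))
    (hg0 : 0 < g 0) : ∀ᶠ R in 𝓝[>] 0, ∀ s ∈ Icc 0 R, g s ∈ Icc (g 0 / 2) (2 * g 0) :=
  eventually_forall_Icc_of_nhdsWithin <| (hg 0 (left_mem_Icc.2 zero_le_one)).eventually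
    (Icc_mem_nhds (by linarith) (by linarith))

/-- `f` is only continuous on `[0, ∞)`; extending it by `f 0` to the left makes the primitive
differentiable everywhere. -/
noncomputable def primitive (f : ℝ → ℝ) (t : ℝ) : ℝ := ∫ s in (0 : ℝ)..t, f (max s 0)

section Primitive

variable {f : ℝ → ℝ}

@[simp] lemma primitive_zero (f : ℝ → ℝ) : primitive f 0 = 0 := intervalIntegral.integral_same

lemma continuous_comp_max_zero (hf : ContinuousOn f (Ici 0)) :
    Continuous fun s => f (max s 0) :=
  hf.comp_continuous (continuous_id.max continuous_const) fun s => le_max_right s 0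

lemma hasDerivAt_primitive (hf : ContinuousOn f (Ici 0)) (t : ℝ) :
    HasDerivAt (primitive f) (f (max t 0)) t :=
  ((continuous_comp_max_zero hf).integral_hasStrictDerivAt 0 t).hasDerivAt

lemma continuous_primitive (hf : ContinuousOn f (Ici 0)) : Continuous (primitive f) :=
  continuous_iff_continuousAt.2 fun t => (hasDerivAt_primitive hf t).continuousAt

lemma primitive_neg (hf : ContinuousOn f (Ici 0)) {γ : ℝ} (hneg : ∀ v ∈ Ioo 0 γ, f v < 0)
    {c : ℝ} (hc : c ∈ Ioc 0 γ) : primitive f c < 0 := by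
  refine neg_pos.1 ?_
  rw [primitive, ← intervalIntegral.integral_neg]
  refine intervalIntegral.intervalIntegral_pos_of_pos_on
    ((continuous_comp_max_zero hf).neg.intervalIntegrable 0 c) (fun s hs => ?_) hc.1
  rw [max_eq_left hs.1.le, neg_pos]
  exact hneg s ⟨hs.1, hs.2.trans_le hc.2⟩

end Primitive

/-- `(p-1)/p |u'|^p + λ F(u)`, written through `φ_p(u')`, the quantity known to be
differentiable. -/
noncomputable def energy (p lam : ℝ) (f u u' : ℝ → ℝ) (r : ℝ) : ℝ :=
  (p - 1) / p * |phi p (u' r)| ^ (p / (p - 1)) + lam * primitive f (u r)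

section Energy

variable {p lam : ℝ} {f u u' : ℝ → ℝ} {r : ℝ}

lemma energy_of_deriv_eq_zero (hp : 1 < p) (hr : u' r = 0) :
    energy p lam f u u' r = lam * primitive f (u r) := by
  have : p / (p - 1) ≠ 0 := (div_pos (by linarith) (by linarith)).ne'
  simp [energy, hr, Real.zero_rpow this]

lemma energy_nonneg_of_eq_zero (hp : 1 < p) (hr : u r = 0) : 0 ≤ energy p lam f u u' r := by
  rw [energy, hr, primitive_zero, mul_zero, add_zero]
  exact mul_nonneg (div_nonneg (by linarith) (by linarith)) (Real.rpow_nonneg (abs_nonneg _) _)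

end Energy

/-- Problem (54) without the condition at `r = 1`, with the derivative `u'` carried explicitly. -/
structure RadialIVP (p : ℝ) (n : ℕ) (lam : ℝ) (f u u' : ℝ → ℝ) : Prop where
  continuousOn : ContinuousOn u (Icc 0 1)
  continuousOn_deriv : ContinuousOn u' (Icc 0 1)
  deriv_zero : u' 0 = 0
  hasDerivAt : ∀ r ∈ Ioo (0 : ℝ) 1, HasDerivAt u (u' r) r
  hasDerivAt_phi : ∀ r ∈ Ioo (0 : ℝ) 1,
    HasDerivAt (fun s => phi p (u' s)) (-((n - 1) / r) * phi p (u' r) - lam * f (u r)) r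

namespace RadialIVP

variable {p lam : ℝ} {n : ℕ} {f u u' : ℝ → ℝ}

lemma continuousOn_phi (hp : 1 < p) (S : RadialIVP p n lam f u u') :
    ContinuousOn (fun r => phi p (u' r)) (Icc 0 1) :=
  (continuous_phi hp).comp_continuousOn S.continuousOn_deriv

lemma hasDerivAt_flux (hn : 1 ≤ n) (S : RadialIVP p n lam f u u') {r : ℝ}
    (hr : r ∈ Ioo (0 : ℝ) 1) :
    HasDerivAt (fun s => s ^ (n - 1) * phi p (u' s)) (-(lam * f (u r)) * r ^ (n - 1)) r := by
  refine ((hasDerivAt_pow (n - 1) r).mul (S.hasDerivAt_phi r hr)).congr_deriv ?_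
  obtain ⟨k, rfl⟩ := Nat.exists_eq_add_of_le hn
  rcases k with _ | k
  · simp
  · have hr0 : r ≠ 0 := hr.1.ne'
    simp only [Nat.add_sub_cancel_left, Nat.add_sub_cancel, pow_succ]
    push_cast
    field_simp
    ring

lemma continuousOn_flux (hp : 1 < p) (S : RadialIVP p n lam f u u') :
    ContinuousOn (fun s => s ^ (n - 1) * phi p (u' s)) (Icc 0 1) :=
  (continuousOn_pow _).mul (S.continuousOn_phi hp)

lemma flux_zero (S : RadialIVP p n lam f u u') : (0 : ℝ) ^ (n - 1) * phi p (u' 0) = 0 := by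
  simp [S.deriv_zero]

lemma phi_deriv_div_mem_Icc (hp : 1 < p) (hn : 1 ≤ n) (hlam : 0 ≤ lam)
    (S : RadialIVP p n lam f u u') {R m M : ℝ} (hR : R ≤ 1)
    (hfu : ∀ s ∈ Icc 0 R, f (u s) ∈ Icc m M) {r : ℝ} (hr : r ∈ Ioc 0 R) :
    phi p (u' r) / r ∈ Icc (-(lam * M / n)) (-(lam * m / n)) := by
  have hIcc : Icc 0 r ⊆ Icc 0 1 := Icc_subset_Icc_right (hr.2.trans hR)
  have hIoo : Ioo 0 r ⊆ Ioo 0 1 := Ioo_subset_Ioo_right (hr.2.trans hR)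
  have hflux := fun x (hx : x ∈ Ioo 0 r) => S.hasDerivAt_flux hn (hIoo hx)
  have hcont := (S.continuousOn_flux hp).mono hIcc
  have hn0 : (n : ℝ) ≠ 0 := by positivity
  have hpow : ∀ c : ℝ, ∀ x ∈ Ioo 0 r,
      HasDerivAt (fun s => -(lam * c / n) * s ^ n) (-(lam * c) * x ^ (n - 1)) x := fun c x _ =>
    ((hasDerivAt_pow n x).const_mul _).congr_deriv (by field_simp)
  have hpow_cont : ∀ c : ℝ, ContinuousOn (fun s => -(lam * c / n) * s ^ n) (Icc 0 r) :=
    fun c => (continuous_const.mul (continuous_pow n)).continuousOn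
  have hmul : ∀ {a b : ℝ}, a ≤ b → ∀ x ∈ Ioo 0 r,
      -(lam * b) * x ^ (n - 1) ≤ -(lam * a) * x ^ (n - 1) := fun hab x hx =>
    mul_le_mul_of_nonneg_right (neg_le_neg (mul_le_mul_of_nonneg_left hab hlam))
      (pow_nonneg hx.1.le _)
  have hr_mem : r ∈ Icc 0 r := right_mem_Icc.2 hr.1.le
  have hupper := sub_le_sub_of_hasDerivAt_le hcont (hpow_cont m) hflux (hpow m)
    (fun x hx => hmul (hfu x ⟨hx.1.le, hx.2.le.trans hr.2⟩).1 x hx) hr_mem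
  have hlower := sub_le_sub_of_hasDerivAt_le (hpow_cont M) hcont (hpow M) hflux
    (fun x hx => hmul (hfu x ⟨hx.1.le, hx.2.le.trans hr.2⟩).2 x hx) hr_mem
  have hrn : r ^ n = r ^ (n - 1) * r := by rw [← pow_succ, Nat.sub_add_cancel hn]
  have hrn0 : 0 < r ^ (n - 1) := pow_pos hr.1 _
  simp only [S.flux_zero, zero_pow (by omega : n ≠ 0), mul_zero, sub_zero, hrn] at hupper hlower
  constructor
  · rw [le_div_iff₀ hr.1]
    nlinarith
  · rw [div_le_iff₀ hr.1]
    nlinarith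

lemma eventually_deriv_neg (hp : 1 < p) (hn : 1 ≤ n) (hlam : 0 < lam)
    (hf : ContinuousOn f (Ici 0)) (S : RadialIVP p n lam f u u')
    (hu : MapsTo u (Icc 0 1) (Ici 0)) (hfu : 0 < f (u 0)) :
    ∀ᶠ R in 𝓝[>] 0, ∀ r ∈ Ioc 0 R, u' r < 0 := by
  filter_upwards [eventually_forall_Icc_mem_Icc (hf.comp S.continuousOn hu) hfu,
    Ioo_mem_nhdsGT one_pos] with R hfR hR r hr
  have hdiv := (S.phi_deriv_div_mem_Icc hp hn hlam.le hR.2.le hfR hr).2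
  have : -(lam * (f (u 0) / 2) / n) < 0 := neg_neg_of_pos (by positivity)
  exact phi_neg_iff.1 (by simpa using (div_lt_iff₀ hr.1).1 (hdiv.trans_lt this))

lemma antitoneOn_energy (hp : 1 < p) (hn : 1 ≤ n) (hf : ContinuousOn f (Ici 0))
    (S : RadialIVP p n lam f u u') (hu : ∀ r ∈ Ioo 0 1, 0 ≤ u r) :
    AntitoneOn (energy p lam f u u') (Icc 0 1) := by
  have hq : 1 < p / (p - 1) := (Real.HolderConjugate.conjExponent hp).symm.lt
  have hcont : ContinuousOn (fun r => |phi p (u' r)| ^ (p / (p - 1))) (Icc 0 1) :=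
    (continuous_abs.rpow_const fun _ => Or.inr (by linarith)).comp_continuousOn
      (S.continuousOn_phi hp)
  refine antitoneOn_of_hasDerivWithinAt_nonpos (convex_Icc 0 1)
    (f' := fun r => -((n - 1) / r) * (u' r * phi p (u' r)))
    ((continuousOn_const.mul hcont).add (continuousOn_const.mul
      ((continuous_primitive hf).comp_continuousOn S.continuousOn))) ?_ ?_ <;> rw [interior_Icc]
  · intro r hr
    have hkin := (hasDerivAt_abs_rpow_phi hq (phi p (u' r))).comp r (S.hasDerivAt_phi r hr)
    have hpot := (hasDerivAt_primitive hf (u r)).comp r (S.hasDerivAt r hr)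
    refine ((hkin.const_mul _).add (hpot.const_mul lam)).hasDerivWithinAt.congr_deriv ?_
    have hp0 : p ≠ 0 := by linarith
    have hp1 : p - 1 ≠ 0 := by linarith
    rw [phi_conj_phi hp, max_eq_left (hu r hr)]
    field_simp
    ring
  · intro r hr
    have : 0 ≤ (n - 1 : ℝ) / r :=
      div_nonneg (sub_nonneg.2 (by exact_mod_cast hn)) hr.1.le
    exact mul_nonpos_of_nonpos_of_nonneg (neg_nonpos.2 this) (mul_phi_nonneg p _)

end RadialIVP

namespace RadialSol

variable {p lam γ : ℝ} {n : ℕ} {f u : ℝ → ℝ}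

lemma radialIVP (hu : RadialSol p n (fun _ v => lam * f v) u) :
    RadialIVP p n lam f u (du u) where
  continuousOn := hu.reg.continuousOn
  continuousOn_deriv := hu.reg.continuousOn_derivWithin (uniqueDiffOn_Icc one_pos) le_rfl
  deriv_zero := hu.bc0
  hasDerivAt r hr := by
    have hmem : Icc (0 : ℝ) 1 ∈ 𝓝 r := Icc_mem_nhds hr.1 hr.2
    rw [du, derivWithin_of_mem_nhds hmem]
    exact ((hu.reg.differentiableOn one_ne_zero r (Ioo_subset_Icc_self hr)).differentiableAt
      hmem).hasDerivAt
  hasDerivAt_phi r hr := by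
    rw [show -((n - 1) / r) * phi p (du u r) - lam * f (u r)
      = deriv (fun s => phi p (du u s)) r by linarith [hu.ode r hr]]
    exact ((hu.reg'.differentiableOn one_ne_zero r (Ioo_subset_Ioc_self hr)).differentiableAt
      (Ioc_mem_nhds hr.1 hr.2)).hasDerivAt

lemma mapsTo_Ici (hu : RadialSol p n (fun _ v => lam * f v) u) : MapsTo u (Icc 0 1) (Ici 0) :=
  fun r hr => by
    rcases hr.2.lt_or_eq with h | rfl
    · exact (hu.pos r ⟨hr.1, h⟩).le
    · exact hu.bc1.ge

/-- The energy decreases from `λ F(u(0))` at the centre to a nonnegative value at the boundary. -/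
lemma lt_map_zero (hp : 1 < p) (hn : 1 ≤ n) (hlam : 0 < lam) (hf : ContinuousOn f (Ici 0))
    (hF : ∀ c ∈ Ioc 0 γ, primitive f c < 0) (hu : RadialSol p n (fun _ v => lam * f v) u) :
    γ < u 0 := by
  have hE := hu.radialIVP.antitoneOn_energy hp hn hf fun r hr =>
    hu.mapsTo_Ici (Ioo_subset_Icc_self hr)
  have h01 := hE (left_mem_Icc.2 zero_le_one) (right_mem_Icc.2 zero_le_one) zero_le_one
  rw [energy_of_deriv_eq_zero hp hu.bc0] at h01
  have h1 := energy_nonneg_of_eq_zero (lam := lam) (f := f) (u' := du u) hp hu.bc1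
  by_contra! h
  linarith [mul_neg_of_pos_of_neg hlam (hF _ ⟨hu.pos 0 ⟨le_rfl, one_pos⟩, h⟩)]

/-- At a first critical point `c`, either `u(c) ≤ γ` and the energy `λ F(u(c))` would be negative,
or `f ∘ u > 0` on `[0, c]` and the flux `r^{n-1} φ_p(u')` could not return to `0`. -/
lemma deriv_neg (hp : 1 < p) (hn : 1 ≤ n) (hlam : 0 < lam) (hf : ContinuousOn f (Ici 0))
    (hpos : ∀ v, γ < v → 0 < f v) (hF : ∀ c ∈ Ioc 0 γ, primitive f c < 0)
    (hu : RadialSol p n (fun _ v => lam * f v) u) : ∀ r ∈ Ioo 0 1, du u r < 0 := by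
  have S := hu.radialIVP
  by_contra! ⟨b, hb, hb0⟩
  obtain ⟨R, hR, hR01⟩ := ((S.eventually_deriv_neg hp hn hlam hf hu.mapsTo_Ici
    (hpos _ (hu.lt_map_zero hp hn hlam hf hF))).and (Ioo_mem_nhdsGT one_pos)).exists
  have hRb : R < b := not_le.1 fun h => (hR b ⟨hb.1, h⟩).not_ge hb0
  obtain ⟨c, hc, hc0, hneg⟩ := exists_first_zero hRb.le
    (S.continuousOn_deriv.mono (Icc_subset_Icc hR01.1.le hb.2.le))
    (hR R ⟨hR01.1, le_rfl⟩) hb0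
  have hc1 : c < 1 := hc.2.trans_lt hb.2
  have hc_pos : 0 < c := hR01.1.trans hc.1
  have hneg' : ∀ x ∈ Ioo 0 c, du u x < 0 := fun x hx =>
    (le_or_gt x R).elim (fun h => hR x ⟨hx.1, h⟩) fun h => hneg x ⟨h.le, hx.2⟩
  have hanti : StrictAntiOn u (Icc 0 c) := by
    refine strictAntiOn_of_hasDerivWithinAt_neg (f' := du u) (convex_Icc 0 c)
      (S.continuousOn.mono (Icc_subset_Icc_right hc1.le)) ?_ ?_ <;> rw [interior_Icc]
    · exact fun x hx => (S.hasDerivAt x ⟨hx.1, hx.2.trans hc1⟩).hasDerivWithinAt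
    · exact hneg'
  rcases le_or_gt (u c) γ with hγ | hγ
  · have hE := S.antitoneOn_energy hp hn hf fun r hr => hu.mapsTo_Ici (Ioo_subset_Icc_self hr)
    have h1 := hE ⟨hc_pos.le, hc1.le⟩ (right_mem_Icc.2 zero_le_one) hc1.le
    rw [energy_of_deriv_eq_zero hp hc0] at h1
    linarith [energy_nonneg_of_eq_zero (lam := lam) (f := f) (u' := du u) hp hu.bc1,
      mul_neg_of_pos_of_neg hlam (hF _ ⟨hu.pos c ⟨hc_pos.le, hc1⟩, hγ⟩)]
  · have hflux : StrictAntiOn (fun s => s ^ (n - 1) * phi p (du u s)) (Icc 0 c) := by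
      refine strictAntiOn_of_hasDerivWithinAt_neg (convex_Icc 0 c)
        (f' := fun x => -(lam * f (u x)) * x ^ (n - 1))
        ((S.continuousOn_flux hp).mono (Icc_subset_Icc_right hc1.le)) ?_ ?_ <;> rw [interior_Icc]
      · exact fun x hx => (S.hasDerivAt_flux hn ⟨hx.1, hx.2.trans hc1⟩).hasDerivWithinAt
      · intro x hx
        have hfx : 0 < f (u x) :=
          hpos _ (hγ.trans (hanti ⟨hx.1.le, hx.2.le⟩ (right_mem_Icc.2 hc_pos.le) hx.2))
        have : 0 < lam * f (u x) * x ^ (n - 1) := by have := hx.1; positivity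
        linarith
    have := hflux (left_mem_Icc.2 hc_pos.le) (right_mem_Icc.2 hc_pos.le) hc_pos
    simp [S.flux_zero, hc0] at this

end RadialSol

structure DecreasingSol (p : ℝ) (n : ℕ) (lam : ℝ) (f : ℝ → ℝ) (d : ℝ) (u u' : ℝ → ℝ) : Prop
    extends RadialIVP p n lam f u u' where
  map_zero : u 0 = d
  mapsTo : MapsTo u (Icc 0 1) (Icc 0 d)
  deriv_neg : ∀ r ∈ Ioo (0 : ℝ) 1, u' r < 0

lemma RadialSol.decreasingSol {p lam γ : ℝ} {n : ℕ} {f u : ℝ → ℝ} (hp : 1 < p) (hn : 1 ≤ n)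
    (hlam : 0 < lam) (hf : ContinuousOn f (Ici 0)) (hpos : ∀ v, γ < v → 0 < f v)
    (hF : ∀ c ∈ Ioc 0 γ, primitive f c < 0) (hu : RadialSol p n (fun _ v => lam * f v) u) :
    DecreasingSol p n lam f (u 0) u (du u) := by
  have hneg := hu.deriv_neg hp hn hlam hf hpos hF
  have hanti : AntitoneOn u (Icc 0 1) := by
    refine antitoneOn_of_hasDerivWithinAt_nonpos (f' := du u) (convex_Icc 0 1)
      hu.radialIVP.continuousOn ?_ ?_ <;> rw [interior_Icc]
    · exact fun r hr => (hu.radialIVP.hasDerivAt r hr).hasDerivWithinAt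
    · exact fun r hr => (hneg r hr).le
  exact { hu.radialIVP with
    map_zero := rfl
    mapsTo := fun r hr => ⟨hu.mapsTo_Ici hr, hanti (left_mem_Icc.2 zero_le_one) hr hr.1⟩
    deriv_neg := hneg }

namespace RadialIVP

variable {p lam : ℝ} {n : ℕ} {f u u' w w' : ℝ → ℝ}

lemma abs_phi_deriv_div_sub_le (hp : 1 < p) (hn : 1 ≤ n) (hlam : 0 ≤ lam)
    (S : RadialIVP p n lam f u u') (T : RadialIVP p n lam f w w') {R C : ℝ} (hR : R ≤ 1)
    (hC : ∀ s ∈ Ioo 0 R, |f (u s) - f (w s)| ≤ C) {r : ℝ} (hr : r ∈ Ioc 0 R) :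
    |phi p (u' r) / r - phi p (w' r) / r| ≤ lam * C / n := by
  have hIcc : Icc 0 r ⊆ Icc 0 1 := Icc_subset_Icc_right (hr.2.trans hR)
  have hIoo : Ioo 0 r ⊆ Ioo 0 1 := Ioo_subset_Ioo_right (hr.2.trans hR)
  have hn0 : (n : ℝ) ≠ 0 := by positivity
  have key := abs_sub_le_of_abs_hasDerivAt_le
    (((S.continuousOn_flux hp).sub (T.continuousOn_flux hp)).mono hIcc)
    (continuous_const.mul (continuous_pow n)).continuousOn
    (fun x hx => (S.hasDerivAt_flux hn (hIoo hx)).sub (T.hasDerivAt_flux hn (hIoo hx)))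
    (fun x _ => ((hasDerivAt_pow n x).const_mul (lam * C / n)).congr_deriv
      (show _ = lam * C * x ^ (n - 1) by field_simp))
    (fun x hx => by
      rw [show -(lam * f (u x)) * x ^ (n - 1) - -(lam * f (w x)) * x ^ (n - 1)
        = lam * (f (w x) - f (u x)) * x ^ (n - 1) by ring, abs_mul, abs_mul, abs_sub_comm,
        abs_of_nonneg hlam, abs_of_nonneg (pow_nonneg hx.1.le _)]
      exact mul_le_mul_of_nonneg_right (mul_le_mul_of_nonneg_left
        (hC x ⟨hx.1, hx.2.trans_le hr.2⟩) hlam) (pow_nonneg hx.1.le _))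
    (right_mem_Icc.2 hr.1.le)
  have hrn : r ^ n = r ^ (n - 1) * r := by rw [← pow_succ, Nat.sub_add_cancel hn]
  have hrn0 : 0 < r ^ (n - 1) := pow_pos hr.1 _
  simp only [Pi.sub_apply, Pi.mul_apply, S.flux_zero, T.flux_zero, zero_pow (by omega : n ≠ 0),
    mul_zero, sub_zero, hrn, ← mul_sub, abs_mul, abs_of_pos hrn0] at key
  rw [← sub_div, abs_div, abs_of_pos hr.1, div_le_iff₀ hr.1]
  nlinarith

/-- Writing `φ_p(u'(r)) = r a` with `a` in a fixed compact interval of `(-∞, 0)`, the homogeneity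
of `φ_q` turns its Lipschitz bound there into the factor `r^{q-1}`. -/
lemma abs_deriv_sub_le (hp : 1 < p) (hn : 1 ≤ n) (hlam : 0 ≤ lam)
    (S : RadialIVP p n lam f u u') (T : RadialIVP p n lam f w w') {R m M C : ℝ} {K : NNReal}
    (hR : R ≤ 1)
    (hK : LipschitzOnWith K (phi (p / (p - 1))) (Icc (-(lam * M / n)) (-(lam * m / n))))
    (hfu : ∀ s ∈ Icc 0 R, f (u s) ∈ Icc m M) (hfw : ∀ s ∈ Icc 0 R, f (w s) ∈ Icc m M)
    (hC : ∀ s ∈ Ioo 0 R, |f (u s) - f (w s)| ≤ C) {r : ℝ} (hr : r ∈ Ioc 0 R) :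
    |u' r - w' r| ≤ K * (lam * C / n) * r ^ (p / (p - 1) - 1) := by
  have hrep : ∀ v, v = r ^ (p / (p - 1) - 1) * phi (p / (p - 1)) (phi p v / r) := fun v => by
    rw [← phi_mul_of_pos hr.1, mul_div_cancel₀ _ hr.1.ne', phi_conj_phi hp]
  have hLip := hK.dist_le_mul _ (S.phi_deriv_div_mem_Icc hp hn hlam hR hfu hr) _
    (T.phi_deriv_div_mem_Icc hp hn hlam hR hfw hr)
  rw [Real.dist_eq, Real.dist_eq] at hLip
  have hdiff := S.abs_phi_deriv_div_sub_le hp hn hlam T hR hC hr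
  calc |u' r - w' r|
      = r ^ (p / (p - 1) - 1) * |phi (p / (p - 1)) (phi p (u' r) / r)
          - phi (p / (p - 1)) (phi p (w' r) / r)| := by
        rw [← abs_of_pos (Real.rpow_pos_of_pos hr.1 (p / (p - 1) - 1)), ← abs_mul, mul_sub,
          ← hrep, ← hrep]
    _ ≤ r ^ (p / (p - 1) - 1) * (K * (lam * C / n)) :=
        mul_le_mul_of_nonneg_left (hLip.trans (mul_le_mul_of_nonneg_left hdiff K.2))
          (Real.rpow_nonneg hr.1.le _)
    _ = K * (lam * C / n) * r ^ (p / (p - 1) - 1) := mul_comm _ _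

lemma abs_sub_le (hp : 1 < p) (hn : 1 ≤ n) (hlam : 0 ≤ lam)
    (S : RadialIVP p n lam f u u') (T : RadialIVP p n lam f w w') {R m M C : ℝ} {K : NNReal}
    (hR : R ≤ 1)
    (hK : LipschitzOnWith K (phi (p / (p - 1))) (Icc (-(lam * M / n)) (-(lam * m / n))))
    (hfu : ∀ s ∈ Icc 0 R, f (u s) ∈ Icc m M) (hfw : ∀ s ∈ Icc 0 R, f (w s) ∈ Icc m M)
    (hC : ∀ s ∈ Ioo 0 R, |f (u s) - f (w s)| ≤ C) (h0 : u 0 = w 0) {r : ℝ} (hr : r ∈ Icc 0 R) :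
    |u r - w r| ≤ K * (lam * C / n) / (p / (p - 1)) * r ^ (p / (p - 1)) := by
  have hderiv := fun x (hx : x ∈ Ioo 0 r) =>
    S.abs_deriv_sub_le hp hn hlam T hR hK hfu hfw hC ⟨hx.1, hx.2.le.trans hr.2⟩
  set q := p / (p - 1)
  have hq : 1 < q := (Real.HolderConjugate.conjExponent hp).symm.lt
  have hIoo : Ioo 0 r ⊆ Ioo 0 1 := Ioo_subset_Ioo_right (hr.2.trans hR)
  have key := abs_sub_le_of_abs_hasDerivAt_le (H := fun x => K * (lam * C / n) / q * x ^ q)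
    ((S.continuousOn.sub T.continuousOn).mono (Icc_subset_Icc_right (hr.2.trans hR)))
    (continuous_const.mul (Real.continuous_rpow_const (by linarith))).continuousOn
    (fun x hx => (S.hasDerivAt x (hIoo hx)).sub (T.hasDerivAt x (hIoo hx)))
    (fun x hx => ((Real.hasDerivAt_rpow_const (Or.inl hx.1.ne')).const_mul _).congr_deriv
      (show _ = K * (lam * C / n) * x ^ (q - 1) by field_simp))
    hderiv (right_mem_Icc.2 hr.1)
  simpa [h0, Real.zero_rpow (by linarith : q ≠ 0)] using key

end RadialIVP

noncomputable def radialField (p lam : ℝ) (n : ℕ) (f : ℝ → ℝ) (t : ℝ) (z : ℝ × ℝ) : ℝ × ℝ :=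
  (phi (p / (p - 1)) z.2, -((n - 1) / t) * z.2 - lam * f z.1)

lemma lipschitzOnWith_radialField {p lam d A B a t : ℝ} {n : ℕ} {f : ℝ → ℝ} {L K : NNReal}
    (hn : 1 ≤ n) (hL : LipschitzOnWith L f (Icc 0 d))
    (hK : LipschitzOnWith K (phi (p / (p - 1))) (Icc (-B) (-A))) (ha : 0 < a) (ht : a ≤ t) :
    LipschitzOnWith (max (K * 1) ⟨n / a + |lam| * L, by positivity⟩)
      (radialField p lam n f t) (Icc 0 d ×ˢ Icc (-B) (-A)) := by
  refine (hK.comp LipschitzWith.prod_snd.lipschitzOnWith fun z hz => hz.2).prodMk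
    (LipschitzOnWith.of_dist_le_mul fun z hz z' hz' => ?_)
  have hn1 : (0 : ℝ) ≤ n - 1 := sub_nonneg.2 (by exact_mod_cast hn)
  have h1 : dist z.1 z'.1 ≤ dist z z' := le_max_left _ _
  have h2 : dist z.2 z'.2 ≤ dist z z' := le_max_right _ _
  have hfL := (hL.dist_le_mul _ hz.1 _ hz'.1).trans (mul_le_mul_of_nonneg_left h1 L.2)
  have hc : (n - 1) / t ≤ n / a :=
    (div_le_div_of_nonneg_left hn1 ha ht).trans (div_le_div_of_nonneg_right (by linarith) ha.le)
  rw [Real.dist_eq] at hfL h2 ⊢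
  show _ ≤ (n / a + |lam| * L) * dist z z'
  rw [show -((n - 1) / t) * z.2 - lam * f z.1 - (-((n - 1) / t) * z'.2 - lam * f z'.1)
    = -((n - 1) / t * (z.2 - z'.2)) - lam * (f z.1 - f z'.1) by ring]
  refine (abs_sub _ _).trans ?_
  rw [abs_neg, abs_mul, abs_mul, abs_of_nonneg (div_nonneg hn1 (ha.trans_le ht).le), add_mul,
    mul_assoc]
  exact add_le_add (mul_le_mul hc h2 (abs_nonneg _) (by positivity))
    (mul_le_mul_of_nonneg_left hfL (abs_nonneg _))

lemma RadialIVP.hasDerivAt_radialField {p lam : ℝ} {n : ℕ} {f u u' : ℝ → ℝ} (hp : 1 < p)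
    (S : RadialIVP p n lam f u u') {t : ℝ} (ht : t ∈ Ioo 0 1) :
    HasDerivAt (fun t => (u t, phi p (u' t))) (radialField p lam n f t (u t, phi p (u' t))) t := by
  simpa only [radialField, phi_conj_phi hp] using
    (S.hasDerivAt t ht).prodMk (S.hasDerivAt_phi t ht)

namespace DecreasingSol

variable {p lam d : ℝ} {n : ℕ} {f u u' w w' : ℝ → ℝ}

lemma continuousOn_comp (hf : ContinuousOn f (Ici 0)) (S : DecreasingSol p n lam f d u u') :
    ContinuousOn (fun r => f (u r)) (Icc 0 1) :=
  hf.comp S.continuousOn (S.mapsTo.mono_right Icc_subset_Ici_self)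

/-- Near the centre `f ∘ u ≈ f(d) > 0` pins `φ_p(u')` to size `r`, which makes the equation
Lipschitz in a weighted sense; the sup of `|u - w|` on `[0, R]` is then contracted by a factor
`C R^q`. -/
lemma exists_eqOn_Icc_zero (hp : 1 < p) (hn : 1 ≤ n) (hlam : 0 < lam)
    (hf : ContDiffOn ℝ 1 f (Ici 0)) (hfd : 0 < f d) (S : DecreasingSol p n lam f d u u')
    (T : DecreasingSol p n lam f d w w') : ∃ R ∈ Ioo 0 1, EqOn u w (Icc 0 R) := by
  set q := p / (p - 1)
  have hq : 1 < q := (Real.HolderConjugate.conjExponent hp).symm.lt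
  obtain ⟨L, hL⟩ := (hf.mono Icc_subset_Ici_self).exists_lipschitzOnWith one_ne_zero
    (convex_Icc 0 d) isCompact_Icc
  obtain ⟨K, hK⟩ := exists_lipschitzOnWith_phi (p := q)
    (by positivity : 0 < lam * (f d / 2) / n) (lam * (2 * f d) / n)
  set c := K * (lam * L / n) / q
  have hsmall : ∀ᶠ R in 𝓝[>] 0, c * R ^ q ≤ 1 / 2 := by
    have : Tendsto (fun R : ℝ => c * R ^ q) (𝓝 0) (𝓝 0) := by
      simpa [Real.zero_rpow (by linarith : q ≠ 0)] using
        ((Real.continuous_rpow_const (by linarith : 0 ≤ q)).tendsto 0).const_mul c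
    exact nhdsWithin_le_nhds (this.eventually (eventually_le_nhds (by norm_num)))
  obtain ⟨R, ⟨⟨hfu, hfw⟩, hcR⟩, hR⟩ :=
    (((eventually_forall_Icc_mem_Icc (S.continuousOn_comp hf.continuousOn) (S.map_zero ▸ hfd)).and
      (eventually_forall_Icc_mem_Icc (T.continuousOn_comp hf.continuousOn)
        (T.map_zero ▸ hfd))).and hsmall).and (Ioo_mem_nhdsGT one_pos) |>.exists
  rw [S.map_zero] at hfu
  rw [T.map_zero] at hfw
  have hIcc : Icc 0 R ⊆ Icc 0 1 := Icc_subset_Icc_right hR.2.le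
  obtain ⟨r₀, hr₀, hmax⟩ := isCompact_Icc.exists_isMaxOn (nonempty_Icc.2 hR.1.le)
    ((S.continuousOn.sub T.continuousOn).mono hIcc).abs
  set N := |u r₀ - w r₀|
  have hC : ∀ s ∈ Ioo 0 R, |f (u s) - f (w s)| ≤ L * N := fun s hs => by
    have hs' := Ioo_subset_Icc_self hs
    simpa [Real.dist_eq] using (hL.dist_le_mul _ (S.mapsTo (hIcc hs')) _
      (T.mapsTo (hIcc hs'))).trans (mul_le_mul_of_nonneg_left (hmax hs') L.2)
  have hN := S.abs_sub_le hp hn hlam.le T.toRadialIVP hR.2.le hK hfu hfw hC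
    (S.map_zero.trans T.map_zero.symm) hr₀
  have hcontr : c * r₀ ^ q ≤ 1 / 2 :=
    (mul_le_mul_of_nonneg_left (Real.rpow_le_rpow hr₀.1 hr₀.2 (by linarith))
      (by positivity)).trans hcR
  have hN0 : N ≤ 0 := by
    have : N ≤ c * r₀ ^ q * N := hN.trans_eq (by simp only [c, q]; ring)
    nlinarith [mul_le_mul_of_nonneg_right hcontr (abs_nonneg (u r₀ - w r₀))]
  exact ⟨R, hR, fun s hs => sub_eq_zero.1 (abs_nonpos_iff.1 ((hmax hs).trans hN0))⟩

lemma exists_phi_deriv_mem_Icc (hp : 1 < p) (S : DecreasingSol p n lam f d u u') {a b : ℝ}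
    (ha : 0 < a) (hb : b < 1) (hab : a ≤ b) :
    ∃ A > 0, ∃ B, ∀ t ∈ Icc a b, phi p (u' t) ∈ Icc (-B) (-A) := by
  have hg := (S.continuousOn_phi hp).mono (Icc_subset_Icc ha.le hb.le)
  obtain ⟨t₁, ht₁, hmax⟩ := isCompact_Icc.exists_isMaxOn (nonempty_Icc.2 hab) hg
  obtain ⟨t₂, -, hmin⟩ := isCompact_Icc.exists_isMinOn (nonempty_Icc.2 hab) hg
  refine ⟨-phi p (u' t₁), neg_pos.2 (phi_neg (S.deriv_neg t₁ ⟨?_, ?_⟩)), -phi p (u' t₂),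
    fun t ht => ⟨by simpa using hmin ht, by simpa using hmax ht⟩⟩
  exacts [ha.trans_le ht₁.1, ht₁.2.trans_lt hb]

lemma eqOn_Icc_of_eq (hp : 1 < p) (hn : 1 ≤ n) (hf : ContDiffOn ℝ 1 f (Ici 0))
    (S : DecreasingSol p n lam f d u u') (T : DecreasingSol p n lam f d w w') {a b : ℝ}
    (ha : 0 < a) (hb : b < 1) (hab : a ≤ b) (h₀ : u a = w a) (h₁ : u' a = w' a) :
    EqOn u w (Icc a b) := by
  obtain ⟨L, hL⟩ := (hf.mono Icc_subset_Ici_self).exists_lipschitzOnWith one_ne_zero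
    (convex_Icc 0 d) isCompact_Icc
  obtain ⟨A₁, hA₁, B₁, hu⟩ := S.exists_phi_deriv_mem_Icc hp ha hb hab
  obtain ⟨A₂, hA₂, B₂, hw⟩ := T.exists_phi_deriv_mem_Icc hp ha hb hab
  obtain ⟨K, hK⟩ := exists_lipschitzOnWith_phi (p := p / (p - 1)) (lt_min hA₁ hA₂) (max B₁ B₂)
  have hsub : Icc a b ⊆ Icc 0 1 := Icc_subset_Icc ha.le hb.le
  have hIoo : Ico a b ⊆ Ioo 0 1 := fun t ht => ⟨ha.trans_le ht.1, ht.2.trans hb⟩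
  have hmem : ∀ {u u' : ℝ → ℝ} {A B : ℝ}, DecreasingSol p n lam f d u u' →
      min A₁ A₂ ≤ A → B ≤ max B₁ B₂ → (∀ t ∈ Icc a b, phi p (u' t) ∈ Icc (-B) (-A)) →
      ∀ t ∈ Ico a b, (u t, phi p (u' t)) ∈ Icc 0 d ×ˢ Icc (-max B₁ B₂) (-min A₁ A₂) :=
    fun S hA hB h t ht => ⟨S.mapsTo (hsub (Ico_subset_Icc_self ht)),
      Icc_subset_Icc (neg_le_neg hB) (neg_le_neg hA) (h t (Ico_subset_Icc_self ht))⟩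
  have := ODE_solution_unique_of_mem_Icc_right
    (fun t ht => lipschitzOnWith_radialField (lam := lam) hn hL hK ha ht.1)
    ((S.continuousOn.prodMk (S.continuousOn_phi hp)).mono hsub)
    (fun t ht => (S.hasDerivAt_radialField hp (hIoo ht)).hasDerivWithinAt)
    (hmem S (min_le_left _ _) (le_max_left _ _) hu)
    ((T.continuousOn.prodMk (T.continuousOn_phi hp)).mono hsub)
    (fun t ht => (T.hasDerivAt_radialField hp (hIoo ht)).hasDerivWithinAt)
    (hmem T (min_le_right _ _) (le_max_right _ _) hw) (by rw [h₀, h₁])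
  exact fun t ht => congrArg Prod.fst (this ht)

lemma eqOn (hp : 1 < p) (hn : 1 ≤ n) (hlam : 0 < lam) (hf : ContDiffOn ℝ 1 f (Ici 0))
    (hfd : 0 < f d) (S : DecreasingSol p n lam f d u u') (T : DecreasingSol p n lam f d w w') :
    EqOn u w (Icc 0 1) := by
  obtain ⟨R, hR, hloc⟩ := S.exists_eqOn_Icc_zero hp hn hlam hf hfd T
  have hmid : R / 2 ∈ Ioo 0 R := ⟨half_pos hR.1, half_lt_self hR.1⟩
  have hderiv : u' (R / 2) = w' (R / 2) := by
    have hmid' : R / 2 ∈ Ioo 0 1 := ⟨hmid.1, hmid.2.trans hR.2⟩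
    have hev : w =ᶠ[𝓝 (R / 2)] u :=
      (eventuallyEq_of_mem (Icc_mem_nhds hmid.1 hmid.2) hloc).symm
    exact ((S.hasDerivAt _ hmid').congr_of_eventuallyEq hev).unique (T.hasDerivAt _ hmid')
  have hIco : EqOn u w (Ico 0 1) := fun s hs => by
    rcases le_or_gt s R with h | h
    · exact hloc ⟨hs.1, h⟩
    · exact S.eqOn_Icc_of_eq hp hn hf T hmid.1 hs.2 (hmid.2.trans h).le
        (hloc ⟨hmid.1.le, hmid.2.le⟩) hderiv ⟨(hmid.2.trans h).le, le_rfl⟩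
  exact hIco.of_subset_closure S.continuousOn T.continuousOn Ico_subset_Icc_self
    (by rw [closure_Ico zero_ne_one])

lemma comp_mul (S : DecreasingSol p n lam f d u u') {κ : ℝ} (hκ0 : 0 < κ) (hκ1 : κ ≤ 1) :
    DecreasingSol p n (κ ^ p * lam) f d (fun r => u (κ * r)) (fun r => κ * u' (κ * r)) := by
  have hmap : MapsTo (κ * ·) (Icc (0 : ℝ) 1) (Icc 0 1) := fun r hr =>
    ⟨mul_nonneg hκ0.le hr.1, mul_le_one₀ hκ1 hr.1 hr.2⟩
  have hmapo : MapsTo (κ * ·) (Ioo (0 : ℝ) 1) (Ioo 0 1) := fun r hr =>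
    ⟨mul_pos hκ0 hr.1, mul_lt_one_of_nonneg_of_lt_one_right hκ1 hr.1.le hr.2⟩
  have hscale : ∀ r : ℝ, HasDerivAt (κ * ·) κ r := fun r => by
    simpa using (hasDerivAt_id r).const_mul κ
  refine ⟨⟨?_, ?_, ?_, ?_, ?_⟩, ?_, ?_, ?_⟩
  · exact S.continuousOn.comp (continuous_const_mul κ).continuousOn hmap
  · exact continuousOn_const.mul
      (S.continuousOn_deriv.comp (continuous_const_mul κ).continuousOn hmap)
  · simp [S.deriv_zero]
  · exact fun r hr => ((S.hasDerivAt _ (hmapo hr)).comp r (hscale r)).congr_deriv (mul_comm _ _)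
  · intro r hr
    have hphi : (fun s => phi p (κ * u' (κ * s))) = fun s => κ ^ (p - 1) * phi p (u' (κ * s)) :=
      funext fun s => phi_mul_of_pos hκ0 _
    rw [hphi, phi_mul_of_pos hκ0]
    refine (((S.hasDerivAt_phi _ (hmapo hr)).comp r (hscale r)).const_mul _).congr_deriv ?_
    rw [Real.rpow_sub_one hκ0.ne']
    field_simp
  · simp [S.map_zero]
  · exact fun r hr => S.mapsTo (hmap hr)
  · exact fun r hr => mul_neg_of_pos_of_neg hκ0 (S.deriv_neg _ (hmapo hr))

end DecreasingSol

lemma RadialSol.eq_of_le {p γ lam₁ lam₂ : ℝ} {n : ℕ} {f u₁ u₂ : ℝ → ℝ} (hp : 1 < p) (hn : 1 ≤ n)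
    (hf : ContDiffOn ℝ 1 f (Ici 0)) (hpos : ∀ v, γ < v → 0 < f v)
    (hF : ∀ c ∈ Ioc 0 γ, primitive f c < 0) (hlam₁ : 0 < lam₁) (hlam₂ : 0 < lam₂)
    (hle : lam₁ ≤ lam₂) (hu₁ : RadialSol p n (fun _ v => lam₁ * f v) u₁)
    (hu₂ : RadialSol p n (fun _ v => lam₂ * f v) u₂) (hmax : u₁ 0 = u₂ 0) :
    lam₁ = lam₂ ∧ EqOn u₁ u₂ (Icc 0 1) := by
  have S₁ := hu₁.decreasingSol hp hn hlam₁ hf.continuousOn hpos hF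
  have S₂ := hu₂.decreasingSol hp hn hlam₂ hf.continuousOn hpos hF
  rw [← hmax] at S₂
  set κ := (lam₁ / lam₂) ^ p⁻¹
  have hκ0 : 0 < κ := Real.rpow_pos_of_pos (div_pos hlam₁ hlam₂) _
  have hκ1 : κ ≤ 1 := Real.rpow_le_one (by positivity) ((div_le_one hlam₂).2 hle) (by positivity)
  have hκp : κ ^ p = lam₁ / lam₂ := Real.rpow_inv_rpow (by positivity) (by linarith)
  have V := S₂.comp_mul hκ0 hκ1
  rw [hκp, div_mul_cancel₀ _ hlam₂.ne'] at V
  have hEq := S₁.eqOn hp hn hlam₁ hf (hpos _ (hu₁.lt_map_zero hp hn hlam₁ hf.continuousOn hF)) V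
  have hκ : κ = 1 := by
    by_contra hκ
    have h := hEq (right_mem_Icc.2 zero_le_one)
    simp only [mul_one, hu₁.bc1] at h
    exact (hu₂.pos κ ⟨hκ0.le, lt_of_le_of_ne hκ1 hκ⟩).ne h
  rw [hκ, Real.one_rpow, eq_comm, div_eq_one_iff_eq hlam₂.ne'] at hκp
  exact ⟨hκp, fun r hr => by simpa [hκ] using hEq hr⟩

/-- Lemma 2.9: for the autonomous problem (54), the maximum value `u(0)`
uniquely identifies the solution pair `(λ, u)`. -/
theorem stmt7 (p : ℝ) (hp : 1 < p) (n : ℕ) (hn : 1 ≤ n)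
    (f : ℝ → ℝ) (hf : ContDiffOn ℝ 1 f (Set.Ici 0))
    (hsign : (∀ v > (0:ℝ), 0 < f v) ∨
      ∃ γ > (0:ℝ), (∀ v ∈ Set.Ioo (0:ℝ) γ, f v < 0) ∧ (∀ v > γ, 0 < f v))
    (lam₁ lam₂ : ℝ) (hlam₁ : 0 < lam₁) (hlam₂ : 0 < lam₂)
    (u₁ u₂ : ℝ → ℝ)
    (hu₁ : RadialSol p n (fun _ v => lam₁ * f v) u₁)
    (hu₂ : RadialSol p n (fun _ v => lam₂ * f v) u₂)
    (hmax : u₁ 0 = u₂ 0) :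
    lam₁ = lam₂ ∧ Set.EqOn u₁ u₂ (Set.Icc 0 1) := by
  obtain ⟨γ, hpos, hF⟩ : ∃ γ, (∀ v, γ < v → 0 < f v) ∧ ∀ c ∈ Ioc 0 γ, primitive f c < 0 := by
    rcases hsign with h | ⟨γ, -, hneg, h⟩
    · exact ⟨0, h, fun c hc => absurd hc.1 hc.2.not_gt⟩
    · exact ⟨γ, h, fun c hc => primitive_neg hf.continuousOn hneg hc⟩
  rcases le_total lam₁ lam₂ with hle | hle
  · exact hu₁.eq_of_le hp hn hf hpos hF hlam₁ hlam₂ hle hu₂ hmax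
  · obtain ⟨h, hEq⟩ := hu₂.eq_of_le hp hn hf hpos hF hlam₂ hlam₁ hle hu₁ hmax.symm
    exact ⟨h.symm, hEq.symm⟩
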